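/- arXiv:math/9910175 — 6 statements merged into one kernel-verified Lean document; each statement's English description precedes it below -/
import Mathlib

section
/- Let C ⊆ F_2^n be a nonempty code with distance distribution (A_i), let K_k denote the binary Krawtchouk polynomial K_k(x) = Σ_{j=0}^{k} (−1)^j·binom(x,j)·binom(n−x,k−j), and let A'_k = (1/|C|)·Σ_{i=0}^n A_i·K_k(i) be the MacWilliams transform. Then A'_k ≥ 0 for every 0 ≤ k ≤ n (Delsarte inequalities). -/
open Finset

/-- Average distance distribution of a binary code `C ⊆ F_2^n`. -/
noncomputable def distDistr (n : ℕ) (C : Finset (Fin n → ZMod 2)) (i : ℕ) : ℝ :=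
  (((C ×ˢ C).filter (fun p => hammingDist p.1 p.2 = i)).card : ℝ) / (C.card : ℝ)

/-- Binary Krawtchouk polynomial `K_k(i)` for the Hamming scheme of length `n`. -/
noncomputable def kraw (n k i : ℕ) : ℝ :=
  ∑ j ∈ Finset.range (k + 1), (-1 : ℝ) ^ j * (i.choose j : ℝ) * ((n - i).choose (k - j) : ℝ)

noncomputable def sgn (a : ZMod 2) : ℝ := if a = 0 then 1 else -1

lemma zmod2_cases (a : ZMod 2) : a = 0 ∨ a = 1 := by revert a; decide

lemma sgn_add (a b : ZMod 2) : sgn (a + b) = sgn a * sgn b := by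
  rcases zmod2_cases a with h | h <;> rcases zmod2_cases b with h' | h' <;>
    subst h <;> subst h' <;> norm_num [sgn] <;> decide

lemma prod_sgn_eq (n : ℕ) (x : Fin n → ZMod 2) (T : Finset (Fin n)) :
    ∏ i ∈ T, sgn (x i)
      = (-1 : ℝ) ^ (((univ.filter fun i => x i = 1) ∩ T).card) := by
  rw [← Finset.prod_filter_mul_prod_filter_not T (fun i => x i = 1)]
  have h1 : ∀ i ∈ T.filter (fun i => x i = 1), sgn (x i) = -1 := by
    intro i hi; simp only [mem_filter] at hi
    simp [sgn, hi.2]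
  have h2 : ∀ i ∈ T.filter (fun i => ¬ x i = 1), sgn (x i) = 1 := by
    intro i hi; simp only [mem_filter] at hi
    have : x i = 0 := (zmod2_cases (x i)).resolve_right hi.2
    simp [sgn, this]
  rw [Finset.prod_congr rfl h1, Finset.prod_congr rfl h2]
  have h3 : (univ.filter fun i => x i = 1) ∩ T = T.filter (fun i => x i = 1) := by
    ext i; simp [and_comm]
  rw [h3, Finset.prod_const, Finset.prod_const_one, mul_one]

lemma count_lemma (n : ℕ) (S : Finset (Fin n)) (j k : ℕ) (hj : j ≤ k) :
    (((univ : Finset (Fin n)).powersetCard k).filter (fun T => (S ∩ T).card = j)).card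
      = (S.card.choose j) * ((n - S.card).choose (k - j)) := by
  have hcard : ((S.powersetCard j) ×ˢ (Sᶜ.powersetCard (k - j))).card
      = (S.card.choose j) * ((n - S.card).choose (k - j)) := by
    simp [Finset.card_powersetCard, Finset.card_compl]
  rw [← hcard]
  apply Finset.card_bij' (fun T _ => (S ∩ T, T \ S)) (fun p _ => p.1 ∪ p.2)
  · intro T hT
    simp only [mem_filter, Finset.mem_powersetCard] at hT
    simp only [Finset.mem_product, Finset.mem_powersetCard]
    have hsd : (T \ S).card + (T ∩ S).card = T.card := Finset.card_sdiff_add_card_inter T S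
    have hTS : (T ∩ S).card = j := by rw [Finset.inter_comm] at hT; exact hT.2
    refine ⟨⟨Finset.inter_subset_left, hT.2⟩, ⟨?_, ?_⟩⟩
    · intro i hi
      simp only [Finset.mem_sdiff] at hi
      simp [hi.2]
    · omega
  · intro p hp
    simp only [Finset.mem_product, Finset.mem_powersetCard] at hp
    have hdisj : Disjoint p.1 p.2 := by
      apply Finset.disjoint_left.mpr
      intro a ha ha2
      exact (Finset.mem_compl.mp (hp.2.1 ha2)) (hp.1.1 ha)
    simp only [mem_filter, Finset.mem_powersetCard]
    constructor
    · exact ⟨Finset.subset_univ _, by rw [Finset.card_union_of_disjoint hdisj, hp.1.2, hp.2.2]; omega⟩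
    · have : S ∩ (p.1 ∪ p.2) = p.1 := by
        rw [Finset.inter_union_distrib_left]
        have h1 : S ∩ p.1 = p.1 := Finset.inter_eq_right.mpr hp.1.1
        have h2 : S ∩ p.2 = ∅ := by
          apply Finset.eq_empty_of_forall_notMem
          intro a ha
          simp only [Finset.mem_inter] at ha
          exact (Finset.mem_compl.mp (hp.2.1 ha.2)) ha.1
        rw [h1, h2, Finset.union_empty]
      rw [this, hp.1.2]
  · intro T hT
    simp only [mem_filter, Finset.mem_powersetCard] at hT
    ext i
    simp only [Finset.mem_union, Finset.mem_inter, Finset.mem_sdiff]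
    by_cases h : i ∈ S <;> simp [h] <;> tauto
  · intro p hp
    simp only [Finset.mem_product, Finset.mem_powersetCard] at hp
    have : S ∩ (p.1 ∪ p.2) = p.1 := by
      rw [Finset.inter_union_distrib_left]
      have h1 : S ∩ p.1 = p.1 := Finset.inter_eq_right.mpr hp.1.1
      have h2 : S ∩ p.2 = ∅ := by
        apply Finset.eq_empty_of_forall_notMem
        intro a ha
        simp only [Finset.mem_inter] at ha
        exact (Finset.mem_compl.mp (hp.2.1 ha.2)) ha.1
      rw [h1, h2, Finset.union_empty]
    have h3 : (p.1 ∪ p.2) \ S = p.2 := by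
      ext i
      simp only [Finset.mem_sdiff, Finset.mem_union]
      constructor
      · rintro ⟨h4 | h4, h5⟩
        · exact absurd (hp.1.1 h4) h5
        · exact h4
      · intro h4
        exact ⟨Or.inr h4, fun hS => (Finset.mem_compl.mp (hp.2.1 h4)) hS⟩
    rw [this, h3]

lemma kraw_eq (n k : ℕ) (S : Finset (Fin n)) :
    kraw n k S.card = ∑ T ∈ (univ : Finset (Fin n)).powersetCard k,
      (-1 : ℝ) ^ ((S ∩ T).card) := by
  rw [← Finset.sum_fiberwise_of_maps_to (g := fun T => (S ∩ T).card)
      (t := Finset.range (k + 1)) (fun T hT => by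
        simp only [Finset.mem_powersetCard] at hT
        have : (S ∩ T).card ≤ T.card := Finset.card_le_card Finset.inter_subset_right
        simp only [Finset.mem_range]; omega)]
  unfold kraw
  apply Finset.sum_congr rfl
  intro j hj
  have hj' : j ≤ k := by simp at hj; omega
  have : ∀ T ∈ ((univ : Finset (Fin n)).powersetCard k).filter (fun T => (S ∩ T).card = j),
      (-1 : ℝ) ^ ((S ∩ T).card) = (-1 : ℝ) ^ j := by
    intro T hT; simp only [mem_filter] at hT; rw [hT.2]
  rw [Finset.sum_congr rfl this, Finset.sum_const, count_lemma n S j k hj']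
  push_cast
  ring

lemma kraw_pair (n k : ℕ) (x y : Fin n → ZMod 2) :
    kraw n k (hammingDist x y) = ∑ T ∈ (univ : Finset (Fin n)).powersetCard k,
      (∏ i ∈ T, sgn (x i)) * (∏ i ∈ T, sgn (y i)) := by
  have hd : hammingDist x y = (univ.filter (fun i => x i + y i = 1)).card := by
    unfold hammingDist
    congr 1
    ext i
    have : x i ≠ y i ↔ x i + y i = 1 := by
      rcases zmod2_cases (x i) with h | h <;> rcases zmod2_cases (y i) with h' | h' <;>
        rw [h, h'] <;> simp <;> decide
    simp [this]
  rw [hd, kraw_eq]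
  apply Finset.sum_congr rfl
  intro T _
  rw [← prod_sgn_eq, ← Finset.prod_mul_distrib]
  exact Finset.prod_congr rfl fun i _ => sgn_add (x i) (y i)

/-- Delsarte inequalities: the MacWilliams transform of the distance distribution
is nonnegative. -/
theorem stmt1 (n : ℕ) (C : Finset (Fin n → ZMod 2)) (hC : C.Nonempty)
    (k : ℕ) (hk : k ≤ n) :
    0 ≤ (1 / (C.card : ℝ)) * ∑ i ∈ Finset.range (n + 1), distDistr n C i * kraw n k i := by
  have key : ∑ i ∈ Finset.range (n + 1),
      (((((C ×ˢ C).filter (fun p => hammingDist p.1 p.2 = i)).card : ℝ))) * kraw n k i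
      = ∑ T ∈ (univ : Finset (Fin n)).powersetCard k,
          (∑ c ∈ C, ∏ i ∈ T, sgn (c i)) ^ 2 := by
    have step1 : ∀ i ∈ Finset.range (n + 1),
        ((((C ×ˢ C).filter (fun p => hammingDist p.1 p.2 = i)).card : ℝ)) * kraw n k i
        = ∑ p ∈ (C ×ˢ C).filter (fun p => hammingDist p.1 p.2 = i),
            kraw n k (hammingDist p.1 p.2) := by
      intro i _
      rw [Finset.sum_congr rfl (fun p hp => by
        simp only [mem_filter] at hp; rw [hp.2]), Finset.sum_const, nsmul_eq_mul]
    rw [Finset.sum_congr rfl step1,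
        Finset.sum_fiberwise_of_maps_to (s := C ×ˢ C) (t := Finset.range (n+1))
          (g := fun p => hammingDist p.1 p.2)
          (f := fun p => kraw n k (hammingDist p.1 p.2))
          (fun p _ => by
            simp only [Finset.mem_range]
            have := hammingDist_le_card_fintype (x := p.1) (y := p.2)
            simp only [Fintype.card_fin] at this; omega)]
    rw [Finset.sum_congr rfl (fun p _ => kraw_pair n k p.1 p.2)]
    rw [Finset.sum_comm]
    apply Finset.sum_congr rfl
    intro T _
    rw [sq, Finset.sum_mul_sum, Finset.sum_product]
  have hsum : ∑ i ∈ Finset.range (n + 1), distDistr n C i * kraw n k i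
      = (1 / (C.card : ℝ)) * ∑ T ∈ (univ : Finset (Fin n)).powersetCard k,
          (∑ c ∈ C, ∏ i ∈ T, sgn (c i)) ^ 2 := by
    rw [← key, Finset.mul_sum]
    apply Finset.sum_congr rfl
    intro i _
    unfold distDistr
    ring
  rw [hsum]
  have h0 : (0:ℝ) ≤ (C.card : ℝ) := Nat.cast_nonneg _
  positivity
end

section
/- Let C ⊆ F_2^n be a nonempty code with distance distribution (A_i). Let f(x) = Σ_{k=0}^n f_k·K_k(x) be a polynomial with nonnegative Krawtchouk coefficients f_k ≥ 0 for 1 ≤ k ≤ n, and let g: {0,…,n} → ℝ satisfy f(i) ≤ g(i) for all 0 ≤ i ≤ n. Then Σ_{i=1}^n g(i)·A_i ≥ |C|·f_0 − f(0). -/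
open Finset

/-!
Delsarte's linear programming bound. With the Walsh characters `χ_S(u) = (-1)^(Σ_{j ∈ S} u_j)`
one has `K_k(d(x, y)) = Σ_{|S| = k} χ_S(x) χ_S(y)`, hence
`Σ_i K_k(i) A_i = |C|⁻¹ Σ_{|S| = k} (Σ_{x ∈ C} χ_S(x))² ≥ 0`. Using `f ≤ g`, `A_0 = 1` and `K_0 = 1`,
`Σ_{i ≥ 1} g(i) A_i ≥ Σ_i f(i) A_i - f(0) = Σ_k f_k Σ_i K_k(i) A_i - f(0) ≥ f_0 Σ_i A_i - f(0)`,
and `Σ_i A_i = |C|`.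
-/

theorem ZMod.neg_one_pow_val_add {R : Type*} [Ring R] (a b : ZMod 2) :
    (-1 : R) ^ (a + b).val = (-1) ^ a.val * (-1) ^ b.val := by
  rw [ZMod.val_add, ← neg_one_pow_eq_pow_mod_two, pow_add]

theorem ZMod.neg_one_pow_val {R : Type*} [Ring R] (a : ZMod 2) :
    (-1 : R) ^ a.val = if a = 0 then 1 else -1 := by
  obtain rfl | rfl : a = 0 ∨ a = 1 := by decide +revert
  all_goals simp [ZMod.val_one]

section Walsh

variable {ι : Type*}

noncomputable def walsh (S : Finset ι) (u : ι → ZMod 2) : ℝ :=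
  ∏ j ∈ S, (-1) ^ (u j).val

theorem walsh_sub (S : Finset ι) (x y : ι → ZMod 2) :
    walsh S (x - y) = walsh S x * walsh S y := by
  simp only [walsh, Pi.sub_apply, CharTwo.sub_eq_add, ZMod.neg_one_pow_val_add, prod_mul_distrib]

theorem walsh_eq_neg_one_pow_card (S : Finset ι) (u : ι → ZMod 2) :
    walsh S u = (-1) ^ #{j ∈ S | u j ≠ 0} := by
  simp [walsh, ZMod.neg_one_pow_val, prod_ite]

end Walsh

section Counting

variable {ι : Type*} [Fintype ι] [DecidableEq ι]

theorem card_powersetCard_filter_card_inter (T : Finset ι) {j k : ℕ} (hjk : j ≤ k) :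
    #{S ∈ powersetCard k univ | #(S ∩ T) = j} = (#T).choose j * (#Tᶜ).choose (k - j) := by
  rw [← card_powersetCard j T, ← card_powersetCard (k - j) Tᶜ, ← card_product]
  refine card_bij' (fun S _ => (S ∩ T, S \ T)) (fun p _ => p.1 ∪ p.2) ?_ ?_ ?_ ?_
  · intro S hS
    simp only [mem_filter, mem_powersetCard, subset_univ, true_and] at hS
    have hsplit := card_sdiff_add_card_inter S T
    simp only [mem_product, mem_powersetCard, inter_subset_right, true_and, hS.2]
    refine ⟨?_, by omega⟩
    simp [sdiff_eq_inter_compl]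
  · rintro ⟨A, B⟩ hAB
    simp only [mem_product, mem_powersetCard] at hAB
    obtain ⟨⟨hAT, hA⟩, hBT, hB⟩ := hAB
    have hAB : Disjoint A B :=
      disjoint_of_subset_left hAT (disjoint_of_subset_right hBT disjoint_compl_right)
    have hBT : B ∩ T = ∅ :=
      disjoint_iff_inter_eq_empty.mp (disjoint_of_subset_left hBT disjoint_compl_left)
    simp only [mem_filter, mem_powersetCard, subset_univ, true_and]
    rw [card_union_of_disjoint hAB, union_inter_distrib_right, inter_eq_left.mpr hAT, hBT,
      union_empty]
    omega
  · intro S _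
    exact sup_inf_sdiff S T
  · rintro ⟨A, B⟩ hAB
    simp only [mem_product, mem_powersetCard] at hAB
    ext x <;> grind [mem_compl]

theorem sum_powersetCard_neg_one_pow_card_inter (T : Finset ι) (k : ℕ) :
    ∑ S ∈ powersetCard k univ, (-1 : ℝ) ^ #(S ∩ T)
      = ∑ j ∈ range (k + 1), (-1) ^ j * (((#T).choose j * (#Tᶜ).choose (k - j) : ℕ) : ℝ) := by
  have hmaps (S) (hS : S ∈ powersetCard k univ) : #(S ∩ T) ∈ range (k + 1) :=
    mem_range_succ_iff.mpr ((card_le_card inter_subset_left).trans (mem_powersetCard.mp hS).2.le)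
  rw [← sum_fiberwise_of_maps_to' hmaps]
  refine sum_congr rfl fun j hj => ?_
  rw [sum_const, card_powersetCard_filter_card_inter T (mem_range_succ_iff.mp hj), nsmul_eq_mul,
    mul_comm]

end Counting

theorem sum_walsh_powersetCard {n : ℕ} (u : Fin n → ZMod 2) (k : ℕ) :
    ∑ S ∈ powersetCard k univ, walsh S u = kraw n k (hammingNorm u) := by
  have hcard (S : Finset (Fin n)) :
      #{j ∈ S | u j ≠ 0} = #(S ∩ ({j | u j ≠ 0} : Finset (Fin n))) := by
    congr 1; ext; simp
  simp_rw [walsh_eq_neg_one_pow_card, hcard, sum_powersetCard_neg_one_pow_card_inter, kraw,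
    card_compl, Fintype.card_fin, hammingNorm]
  push_cast
  ring_nf

theorem kraw_hammingDist {n : ℕ} (x y : Fin n → ZMod 2) (k : ℕ) :
    kraw n k (hammingDist x y) = ∑ S ∈ powersetCard k univ, walsh S x * walsh S y := by
  simp_rw [hammingDist_eq_hammingNorm, neg_add_eq_sub, ← sum_walsh_powersetCard, walsh_sub,
    mul_comm]

theorem sum_kraw_hammingDist_nonneg {n : ℕ} (C : Finset (Fin n → ZMod 2)) (k : ℕ) :
    0 ≤ ∑ p ∈ C ×ˢ C, kraw n k (hammingDist p.1 p.2) := by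
  simp_rw [kraw_hammingDist]
  rw [sum_comm]
  refine sum_nonneg fun S _ => ?_
  rw [sum_product, ← sum_mul_sum]
  exact mul_self_nonneg _

theorem kraw_zero_left (n i : ℕ) : kraw n 0 i = 1 := by
  simp [kraw]

section DistanceDistribution

variable {n : ℕ}

theorem distDistr_nonneg (C : Finset (Fin n → ZMod 2)) (i : ℕ) : 0 ≤ distDistr n C i := by
  unfold distDistr
  positivity

theorem distDistr_zero {C : Finset (Fin n → ZMod 2)} (hC : C.Nonempty) :
    distDistr n C 0 = 1 := by
  have hdiag : {p ∈ C ×ˢ C | hammingDist p.1 p.2 = 0} = C.diag := by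
    ext ⟨x, y⟩
    simp only [mem_filter, mem_product, hammingDist_eq_zero, mem_diag]
    grind
  rw [distDistr, hdiag, diag_card, div_self (Nat.cast_ne_zero.mpr hC.card_pos.ne')]

theorem sum_mul_distDistr (C : Finset (Fin n → ZMod 2)) (φ : ℕ → ℝ) :
    ∑ i ∈ range (n + 1), φ i * distDistr n C i
      = (∑ p ∈ C ×ˢ C, φ (hammingDist p.1 p.2)) / #C := by
  have hmaps (p : (Fin n → ZMod 2) × (Fin n → ZMod 2)) (_ : p ∈ C ×ˢ C) :
      hammingDist p.1 p.2 ∈ range (n + 1) := by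
    simpa [mem_range_succ_iff] using hammingDist_le_card_fintype (x := p.1) (y := p.2)
  rw [← sum_fiberwise_of_maps_to' hmaps, sum_div]
  refine sum_congr rfl fun i _ => ?_
  rw [sum_const, nsmul_eq_mul, distDistr, mul_div_assoc', mul_comm]

end DistanceDistribution

theorem delsarte_lp_bound {n : ℕ} {A : ℕ → ℝ} {M : ℝ} (hA0 : A 0 = 1)
    (hA : ∀ i ∈ Icc 1 n, 0 ≤ A i) (hM : ∑ i ∈ range (n + 1), A i = M)
    (hdelsarte : ∀ k, 0 ≤ ∑ i ∈ range (n + 1), kraw n k i * A i)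
    {fc g : ℕ → ℝ} (hfc : ∀ k, 1 ≤ k → k ≤ n → 0 ≤ fc k)
    (hfg : ∀ i, i ≤ n → (∑ k ∈ range (n + 1), fc k * kraw n k i) ≤ g i) :
    M * fc 0 - ∑ k ∈ range (n + 1), fc k * kraw n k 0 ≤ ∑ i ∈ Icc 1 n, g i * A i := by
  set f : ℕ → ℝ := fun i => ∑ k ∈ range (n + 1), fc k * kraw n k i
  have hsplit (h : ℕ → ℝ) : ∑ i ∈ range (n + 1), h i = h 0 + ∑ i ∈ Icc 1 n, h i := by
    rw [Nat.range_succ_eq_Icc_zero, ← insert_Icc_add_one_left_eq_Icc n.zero_le,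
      sum_insert (by simp), zero_add]
  calc M * fc 0 - f 0
      = fc 0 * ∑ i ∈ range (n + 1), kraw n 0 i * A i - f 0 := by
        simp only [kraw_zero_left, one_mul, hM, mul_comm M]
    _ ≤ ∑ k ∈ range (n + 1), fc k * ∑ i ∈ range (n + 1), kraw n k i * A i - f 0 := by
        rw [hsplit fun k => fc k * ∑ i ∈ range (n + 1), kraw n k i * A i]
        gcongr
        refine le_add_of_nonneg_right (sum_nonneg fun k hk => ?_)
        obtain ⟨hk1, hkn⟩ := mem_Icc.mp hk
        exact mul_nonneg (hfc k hk1 hkn) (hdelsarte k)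
    _ = ∑ i ∈ range (n + 1), f i * A i - f 0 := by
        simp only [f, mul_sum, sum_mul, mul_assoc]
        rw [sum_comm]
    _ = ∑ i ∈ Icc 1 n, f i * A i := by
        rw [hsplit, hA0, mul_one, add_sub_cancel_left]
    _ ≤ ∑ i ∈ Icc 1 n, g i * A i :=
        sum_le_sum fun i hi => mul_le_mul_of_nonneg_right (hfg i (mem_Icc.mp hi).2) (hA i hi)

/-- Main theorem of the polynomial method: if `f(x) = Σ f_k K_k(x)` has nonnegative
Krawtchouk coefficients `f_k ≥ 0` (1 ≤ k ≤ n) and `f(i) ≤ g(i)` on `{0,…,n}`, then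
`Σ_{i=1}^n g(i) A_i ≥ |C| f_0 − f(0)`. -/
theorem stmt3 (n : ℕ) (C : Finset (Fin n → ZMod 2)) (hC : C.Nonempty)
    (fc : ℕ → ℝ) (g : ℕ → ℝ)
    (hfc : ∀ k, 1 ≤ k → k ≤ n → 0 ≤ fc k)
    (hfg : ∀ i, i ≤ n → (∑ k ∈ Finset.range (n + 1), fc k * kraw n k i) ≤ g i) :
    ∑ i ∈ Finset.Icc 1 n, g i * distDistr n C i
      ≥ (C.card : ℝ) * fc 0 - (∑ k ∈ Finset.range (n + 1), fc k * kraw n k 0) := by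
  have hcard : (#C : ℝ) ≠ 0 := Nat.cast_ne_zero.mpr hC.card_pos.ne'
  have hsum : ∑ i ∈ range (n + 1), distDistr n C i = #C := by
    simpa [card_product, hcard, sq] using sum_mul_distDistr C fun _ => 1
  have hdelsarte (k : ℕ) : 0 ≤ ∑ i ∈ range (n + 1), kraw n k i * distDistr n C i := by
    rw [sum_mul_distDistr]
    exact div_nonneg (sum_kraw_hammingDist_nonneg C k) (Nat.cast_nonneg _)
  exact delsarte_lp_bound (distDistr_zero hC) (fun i _ => distDistr_nonneg C i) hsum hdelsarte
    hfc hfg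
end

section
/- (Plotkin-type bound) If C ⊆ F_2^n is a code with minimum distance d > n/2, then |C| ≤ 2d/(2d − n). -/
open Finset

private lemma stmt13_aux {n : ℕ} (C : Finset (Fin n → ZMod 2)) (i : Fin n) :
    2 * (∑ c ∈ C, ∑ c' ∈ C, (if c i ≠ c' i then (1:ℕ) else 0)) ≤ C.card ^ 2 := by
  classical
  have h01 : ∀ x : ZMod 2, ¬ x = 0 ↔ x = 1 := by decide
  have hne : ∀ x y : ZMod 2, (¬ x = y) ↔ (y = x + 1) := by decide
  set a := (C.filter fun c => c i = 0).card with ha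
  set b := (C.filter fun c => c i = 1).card with hb
  have hb' : (C.filter fun c => ¬ c i = 0).card = b := by
    rw [hb]
    congr 1
    exact Finset.filter_congr fun c _ => (h01 (c i))
  have hab : a + b = C.card := by
    rw [← hb', ha]
    exact Finset.card_filter_add_card_filter_not (s := C) (p := fun c => c i = 0)
  have hinner : ∀ c ∈ C, (∑ c' ∈ C, (if c i ≠ c' i then (1:ℕ) else 0))
      = (C.filter fun c' => c' i = c i + 1).card := by
    intro c _
    simp only [ne_eq, hne]
    rw [Finset.card_filter]
  have h1 : ∀ c ∈ C.filter (fun c => c i = 0),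
      (∑ c' ∈ C, (if c i ≠ c' i then (1:ℕ) else 0)) = b := by
    intro c hc
    rw [hinner c (Finset.mem_of_mem_filter c hc), (Finset.mem_filter.mp hc).2, zero_add]
  have h2 : ∀ c ∈ C.filter (fun c => ¬ c i = 0),
      (∑ c' ∈ C, (if c i ≠ c' i then (1:ℕ) else 0)) = a := by
    intro c hc
    have hone : c i = 1 := (h01 _).mp (Finset.mem_filter.mp hc).2
    have h110 : (1 : ZMod 2) + 1 = 0 := by decide
    rw [hinner c (Finset.mem_of_mem_filter c hc), hone, h110]
  rw [← Finset.sum_filter_add_sum_filter_not C (fun c => c i = 0),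
      Finset.sum_congr rfl h1, Finset.sum_congr rfl h2,
      Finset.sum_const, Finset.sum_const, smul_eq_mul, smul_eq_mul, ← ha, hb', ← hab]
  nlinarith [two_mul_le_add_sq a b]

/-- Plotkin-type bound: if `d > n/2` then `|C| ≤ 2d/(2d − n)`. -/
theorem stmt13 (n d : ℕ) (C : Finset (Fin n → ZMod 2)) (hd : n < 2 * d)
    (hdist : ∀ c ∈ C, ∀ c' ∈ C, c ≠ c' → d ≤ hammingDist c c') :
    (C.card : ℝ) ≤ (2 * d : ℝ) / ((2 * d : ℝ) - n) := by
  classical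
  have hpos : (0:ℝ) < 2 * d - n := by
    have : (n:ℝ) < 2 * d := by exact_mod_cast hd
    linarith
  rcases Nat.eq_zero_or_pos C.card with h0 | hM
  · rw [h0]
    push_cast
    positivity
  rw [le_div_iff₀ hpos]
  set S := ∑ c ∈ C, ∑ c' ∈ C, hammingDist c c' with hS
  have hlow : C.card * (C.card - 1) * d ≤ S := by
    calc C.card * (C.card - 1) * d = ∑ _c ∈ C, (C.card - 1) * d := by
          rw [Finset.sum_const, smul_eq_mul]; ring
      _ ≤ S := by
          apply Finset.sum_le_sum
          intro c hc
          calc (C.card - 1) * d = ∑ _c' ∈ C.erase c, d := by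
                rw [Finset.sum_const, Finset.card_erase_of_mem hc, smul_eq_mul]
            _ ≤ ∑ c' ∈ C.erase c, hammingDist c c' := by
                apply Finset.sum_le_sum
                intro c' hc'
                exact hdist c hc c' (Finset.mem_of_mem_erase hc')
                  (fun h => (Finset.mem_erase.mp hc').1 h.symm)
            _ = ∑ c' ∈ C, hammingDist c c' := by
                rw [← Finset.add_sum_erase C _ hc, hammingDist_self, zero_add]
  have hhigh : 2 * S ≤ n * C.card ^ 2 := by
    have hS' : S = ∑ i : Fin n, ∑ c ∈ C, ∑ c' ∈ C, (if c i ≠ c' i then (1:ℕ) else 0) := by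
      calc S = ∑ c ∈ C, ∑ c' ∈ C, ∑ i : Fin n, (if c i ≠ c' i then (1:ℕ) else 0) := by
            rw [hS]
            exact Finset.sum_congr rfl fun c _ => Finset.sum_congr rfl fun c' _ => by
              simp [hammingDist, Finset.card_filter]
        _ = ∑ c ∈ C, ∑ i : Fin n, ∑ c' ∈ C, (if c i ≠ c' i then (1:ℕ) else 0) :=
            Finset.sum_congr rfl fun c _ => Finset.sum_comm
        _ = _ := Finset.sum_comm
    rw [hS', Finset.mul_sum]
    calc ∑ i : Fin n, 2 * (∑ c ∈ C, ∑ c' ∈ C, (if c i ≠ c' i then (1:ℕ) else 0))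
        ≤ ∑ _i : Fin n, C.card ^ 2 := Finset.sum_le_sum fun i _ => stmt13_aux C i
      _ = n * C.card ^ 2 := by
          rw [Finset.sum_const, Finset.card_univ, Fintype.card_fin, smul_eq_mul]
  have key : 2 * (C.card * (C.card - 1) * d) ≤ n * C.card ^ 2 :=
    le_trans (Nat.mul_le_mul_left 2 hlow) hhigh
  have keyR : 2 * ((C.card : ℝ) * ((C.card : ℝ) - 1) * d) ≤ (n : ℝ) * (C.card : ℝ) ^ 2 := by
    have hc1 : ((C.card - 1 : ℕ) : ℝ) = (C.card : ℝ) - 1 := by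
      rw [Nat.cast_sub hM]; norm_num
    calc 2 * ((C.card : ℝ) * ((C.card : ℝ) - 1) * d)
        = ((2 * (C.card * (C.card - 1) * d) : ℕ) : ℝ) := by push_cast [hc1]; ring
      _ ≤ ((n * C.card ^ 2 : ℕ) : ℝ) := by exact_mod_cast key
      _ = (n : ℝ) * (C.card : ℝ) ^ 2 := by push_cast; ring
  have hM1 : (1:ℝ) ≤ (C.card : ℝ) := by exact_mod_cast hM
  nlinarith [keyR, hM1]
end

section
/- Let C be a finite nonempty set of points on the unit sphere S^{n−1} ⊂ ℝ^n, and let f(t) = Σ_{k=0}^l f_k·P_k^{λ,λ}(t) with λ = (n−3)/2 be a polynomial whose Gegenbauer/Jacobi coefficients satisfy f_k ≥ 0 for 1 ≤ k ≤ l and f_0 > 0, and such that f(t) ≤ 0 for all t ∈ [−1, cos θ], where θ is such that every pair of distinct points of C has inner product at most cos θ. Then |C| ≤ f(1)/f_0 (linear programming bound on spherical codes). -/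
open Finset

/-!
Delsarte's argument: double count `S = ∑_{c,c' ∈ C} f ⟨c, c'⟩`. Expanding `f` in the basis `P k`,
the term `k = 0` contributes `f₀ |C|²` and every other term is nonnegative by positive
definiteness, so `S ≥ f₀ |C|²`. On the other hand the diagonal contributes `|C| f(1)` and every
off-diagonal term is `≤ 0` because its inner product lies in `[-1, cos θ]`, so `S ≤ |C| f(1)`.
-/

def basisExpansion (P : ℕ → ℝ → ℝ) (fc : ℕ → ℝ) (l : ℕ) (t : ℝ) : ℝ :=
  ∑ k ∈ range (l + 1), fc k * P k t

namespace Finset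

variable {α : Type*} (s : Finset α)

theorem sum_sum_le_sum_diag_of_offDiag_nonpos {K : α → α → ℝ}
    (hK : ∀ c ∈ s, ∀ c' ∈ s, c ≠ c' → K c c' ≤ 0) :
    ∑ c ∈ s, ∑ c' ∈ s, K c c' ≤ ∑ c ∈ s, K c c := by
  classical
  refine sum_le_sum fun c hc => ?_
  rw [← add_sum_erase s _ hc]
  have hoff : ∑ c' ∈ s.erase c, K c c' ≤ 0 :=
    sum_nonpos fun c' hc' => hK c hc c' (mem_of_mem_erase hc') (ne_of_mem_erase hc').symm
  linarith

variable (g : α → α → ℝ) (P : ℕ → ℝ → ℝ) (fc : ℕ → ℝ) (l : ℕ)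

theorem sum_sum_basisExpansion_eq :
    ∑ c ∈ s, ∑ c' ∈ s, basisExpansion P fc l (g c c') =
      ∑ k ∈ range (l + 1), fc k * ∑ c ∈ s, ∑ c' ∈ s, P k (g c c') := by
  simp only [basisExpansion, mul_sum]
  exact (sum_congr rfl fun _ _ => sum_comm).trans sum_comm

theorem mul_card_sq_le_sum_sum_basisExpansion (hP0 : ∀ t, P 0 t = 1)
    (hposdef : ∀ k, 0 ≤ ∑ c ∈ s, ∑ c' ∈ s, P k (g c c'))
    (hfc : ∀ k, 1 ≤ k → k ≤ l → 0 ≤ fc k) :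
    fc 0 * (#s : ℝ) ^ 2 ≤ ∑ c ∈ s, ∑ c' ∈ s, basisExpansion P fc l (g c c') := by
  rw [sum_sum_basisExpansion_eq, sum_range_succ']
  have hhigher : 0 ≤ ∑ k ∈ range l, fc (k + 1) * ∑ c ∈ s, ∑ c' ∈ s, P (k + 1) (g c c') :=
    sum_nonneg fun k hk =>
      mul_nonneg (hfc _ k.succ_pos (mem_range.mp hk)) (hposdef _)
  have hzero : ∑ c ∈ s, ∑ c' ∈ s, P 0 (g c c') = (#s : ℝ) ^ 2 := by
    simp [hP0, sq]
  rw [hzero]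
  linarith

theorem card_le_basisExpansion_one_div (hs : s.Nonempty) (hdiag : ∀ c ∈ s, g c c = 1)
    (hP0 : ∀ t, P 0 t = 1) (hposdef : ∀ k, 0 ≤ ∑ c ∈ s, ∑ c' ∈ s, P k (g c c'))
    (hf0 : 0 < fc 0) (hfc : ∀ k, 1 ≤ k → k ≤ l → 0 ≤ fc k)
    (hoff : ∀ c ∈ s, ∀ c' ∈ s, c ≠ c' → basisExpansion P fc l (g c c') ≤ 0) :
    (#s : ℝ) ≤ basisExpansion P fc l 1 / fc 0 := by
  have hlower := mul_card_sq_le_sum_sum_basisExpansion s g P fc l hP0 hposdef hfc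
  have hupper : ∑ c ∈ s, ∑ c' ∈ s, basisExpansion P fc l (g c c') ≤
      #s * basisExpansion P fc l 1 := by
    refine (sum_sum_le_sum_diag_of_offDiag_nonpos s hoff).trans_eq ?_
    rw [sum_congr rfl fun c hc => by rw [hdiag c hc], sum_const, nsmul_eq_mul]
  have hcard : (0 : ℝ) < #s := by exact_mod_cast hs.card_pos
  have h : (#s : ℝ) * (fc 0 * #s) ≤ #s * basisExpansion P fc l 1 := by nlinarith
  rw [le_div_iff₀ hf0, mul_comm]
  exact le_of_mul_le_mul_left h hcard

end Finset

/-- `P k` stands for the Jacobi polynomial `P_k^{λ,λ}` with `λ = (n−3)/2`. -/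
theorem stmt15 (n l : ℕ) (C : Finset (EuclideanSpace ℝ (Fin n)))
    (hC : C.Nonempty) (hunit : ∀ c ∈ C, ‖c‖ = 1)
    (P : ℕ → ℝ → ℝ) (hP0 : ∀ t, P 0 t = 1)
    (hposdef : ∀ k, 0 ≤ ∑ c ∈ C, ∑ c' ∈ C, P k (inner ℝ c c' : ℝ))
    (fc : ℕ → ℝ) (hf0 : 0 < fc 0)
    (hfc : ∀ k, 1 ≤ k → k ≤ l → 0 ≤ fc k)
    (θ : ℝ)
    (hsep : ∀ c ∈ C, ∀ c' ∈ C, c ≠ c' → (inner ℝ c c' : ℝ) ≤ Real.cos θ)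
    (hfneg : ∀ t : ℝ, -1 ≤ t → t ≤ Real.cos θ →
      (∑ k ∈ Finset.range (l + 1), fc k * P k t) ≤ 0) :
    (C.card : ℝ) ≤ (∑ k ∈ Finset.range (l + 1), fc k * P k 1) / fc 0 :=
  C.card_le_basisExpansion_one_div (fun c c' => inner ℝ c c') P fc l hC
    (fun c hc => inner_self_eq_one_of_norm_eq_one (hunit c hc)) hP0 hposdef hf0 hfc
    fun c hc c' hc' hne =>
      hfneg _ (neg_one_le_real_inner_of_norm_eq_one (hunit c hc) (hunit c' hc'))
        (hsep c hc c' hc' hne)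
end

section
/- Let C ⊆ S^{n−1} be a finite code, m a positive integer, and u_0 < u_1 < … < u_m points partitioning [u_0, s_max] into m equal segments U_i = [u_i, u_{i+1}], where s_max = max_{c≠c'} ⟨c,c'⟩ and u_0 < s_max < 1. Suppose f(x) = Σ_{k=0}^l f_k P_k^{λ,λ}(x) satisfies f_k ≥ 0 for 1 ≤ k ≤ l, f(x) ≤ 0 on [−1, u_0], and f(x) ≥ 0 on [u_0, 1], and that f_0·|C| − f(1) > 0. Then there exists 0 ≤ i ≤ m−1 and a point s ∈ U_i with a(u_i, u_{i+1}) ≥ (f_0·|C| − f(1))/(m·f(s)), where a(s,t) = (1/|C|)·#{(c,c') ∈ C², c≠c' : s ≤ ⟨c,c'⟩ ≤ t}. -/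
/-!
Delsarte's argument: expanding `f` in the positive definite `P k` gives
`∑_{c,c'} f ⟪c,c'⟫ ≥ f₀ |C|²`, and removing the diagonal, where `⟪c,c⟫ = 1`, leaves at least
`|C| (f₀ |C| - f 1)` on the pairs of distinct codewords. Pairs with inner product below `u₀`
contribute nonpositively and the others lie in `[u₀, s_max]`, where `f ≥ 0`; so some segment `U_i`
carries at least a `1/m` share of that mass, and bounding `f` on `U_i` by its largest value `f s`
at a pair in `U_i` gives the bound on `a(u_i, u_{i+1})`.
-/

open Finset
open scoped Classical

/-- Distance density of a spherical code: normalized number of ordered pairs of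
distinct codewords with inner product in `[s,t]`. -/
noncomputable def distDensity (n : ℕ) (C : Finset (EuclideanSpace ℝ (Fin n)))
    (s t : ℝ) : ℝ :=
  (((C ×ˢ C).filter (fun pc => pc.1 ≠ pc.2 ∧
      s ≤ (inner ℝ pc.1 pc.2 : ℝ) ∧ (inner ℝ pc.1 pc.2 : ℝ) ≤ t)).card : ℝ) / (C.card : ℝ)

def equiSegment (a b : ℝ) (m i : ℕ) : Set ℝ :=
  Set.Icc (a + i * (b - a) / m) (a + (i + 1) * (b - a) / m)

theorem left_le_of_mem_equiSegment {a b t : ℝ} {m i : ℕ} (hab : a ≤ b)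
    (ht : t ∈ equiSegment a b m i) : a ≤ t := by
  have : 0 ≤ i * (b - a) / m := by have := sub_nonneg.2 hab; positivity
  linarith [ht.1]

theorem exists_mem_equiSegment {a b t : ℝ} {m : ℕ} (hm : 0 < m) (ht : t ∈ Set.Icc a b) :
    ∃ i < m, t ∈ equiSegment a b m i := by
  have hlast : t ≤ a + ((m - 1 : ℕ) + 1) * (b - a) / m := by
    rw [Nat.cast_pred hm, sub_add_cancel, mul_div_cancel_left₀ _ (by positivity)]
    linarith [ht.2]
  have hex : ∃ i : ℕ, t ≤ a + (i + 1) * (b - a) / m := ⟨_, hlast⟩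
  refine ⟨Nat.find hex, by have := Nat.find_min' hex hlast; omega, ?_, Nat.find_spec hex⟩
  cases hfind : Nat.find hex with
  | zero => simpa using ht.1
  | succ j =>
    have hprev := Nat.find_min hex (by omega : j < Nat.find hex)
    push_cast
    linarith [not_le.1 hprev]

theorem sum_le_sum_sum_filter_equiSegment {ι : Type*} (S : Finset ι) (x h : ι → ℝ)
    {a b : ℝ} {m : ℕ} (hm : 0 < m) (hab : a ≤ b) (hxb : ∀ p ∈ S, x p ≤ b)
    (hneg : ∀ p ∈ S, x p < a → h p ≤ 0) (hpos : ∀ p ∈ S, a ≤ x p → 0 ≤ h p) :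
    ∑ p ∈ S, h p ≤ ∑ i ∈ range m, ∑ p ∈ S with x p ∈ equiSegment a b m i, h p := by
  have hcount : ∀ p ∈ S, h p ≤ #{i ∈ range m | x p ∈ equiSegment a b m i} * h p := by
    intro p hp
    rcases lt_or_ge (x p) a with hlt | hge
    · have hempty : {i ∈ range m | x p ∈ equiSegment a b m i} = ∅ :=
        filter_false_of_mem fun i _ hi => hlt.not_ge (left_le_of_mem_equiSegment hab hi)
      simpa [hempty] using hneg p hp hlt
    · obtain ⟨i, hi, hxi⟩ := exists_mem_equiSegment hm ⟨hge, hxb p hp⟩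
      have hone : (1 : ℝ) ≤ #{i ∈ range m | x p ∈ equiSegment a b m i} := by
        exact_mod_cast card_pos.2 ⟨i, mem_filter.2 ⟨mem_range.2 hi, hxi⟩⟩
      nlinarith [hpos p hp hge]
  calc ∑ p ∈ S, h p ≤ ∑ p ∈ S, #{i ∈ range m | x p ∈ equiSegment a b m i} * h p :=
        sum_le_sum hcount
    _ = ∑ i ∈ range m, ∑ p ∈ S with x p ∈ equiSegment a b m i, h p := by
        simp only [sum_filter, ← nsmul_eq_mul, ← sum_const]
        exact sum_comm

theorem Finset.exists_sum_le_card_nsmul {ι M : Type*} [AddCommMonoid M] [LinearOrder M]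
    [IsOrderedAddMonoid M] {s : Finset ι} (hs : s.Nonempty) (h : ι → M) :
    ∃ i ∈ s, ∑ j ∈ s, h j ≤ #s • h i := by
  obtain ⟨i, hi, hmax⟩ := s.exists_max_image h hs
  exact ⟨i, hi, s.sum_le_card_nsmul h (h i) hmax⟩

theorem exists_equiSegment_le_mul_card_mul {ι : Type*} (S : Finset ι) (x h : ι → ℝ)
    {a b A : ℝ} {m : ℕ} (hm : 0 < m) (hab : a ≤ b) (hxb : ∀ p ∈ S, x p ≤ b)
    (hneg : ∀ p ∈ S, x p < a → h p ≤ 0) (hpos : ∀ p ∈ S, a ≤ x p → 0 ≤ h p)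
    (hA : 0 < A) (hsum : A ≤ ∑ p ∈ S, h p) :
    ∃ i < m, ∃ p ∈ S, x p ∈ equiSegment a b m i ∧
      A ≤ m * #{q ∈ S | x q ∈ equiSegment a b m i} * h p := by
  obtain ⟨i, hi, hAi⟩ : ∃ i ∈ range m, A / m ≤ ∑ p ∈ S with x p ∈ equiSegment a b m i, h p := by
    refine exists_le_of_sum_le (nonempty_range_iff.2 hm.ne') ?_
    rw [sum_const, card_range, nsmul_eq_mul, mul_div_cancel₀ _ (by positivity)]
    exact hsum.trans (sum_le_sum_sum_filter_equiSegment S x h hm hab hxb hneg hpos)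
  have hsegment_pos : 0 < ∑ p ∈ S with x p ∈ equiSegment a b m i, h p :=
    lt_of_lt_of_le (by positivity) hAi
  obtain ⟨p, hp, hmax⟩ := exists_sum_le_card_nsmul (nonempty_of_sum_ne_zero hsegment_pos.ne') h
  obtain ⟨hpS, hpi⟩ := mem_filter.1 hp
  refine ⟨i, mem_range.1 hi, p, hpS, hpi, ?_⟩
  rw [div_le_iff₀' (by positivity)] at hAi
  rw [nsmul_eq_mul] at hmax
  rw [mul_assoc]
  exact hAi.trans (by gcongr)

theorem mul_card_sq_le_sum_sum {α : Type*} (C : Finset α) (g : α → α → ℝ) {l : ℕ}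
    (P : ℕ → ℝ → ℝ) (hP0 : ∀ t, P 0 t = 1) (hposdef : ∀ k, 0 ≤ ∑ c ∈ C, ∑ c' ∈ C, P k (g c c'))
    (fc : ℕ → ℝ) (hfc : ∀ k, 1 ≤ k → k ≤ l → 0 ≤ fc k)
    (f : ℝ → ℝ) (hf : ∀ t, f t = ∑ k ∈ range (l + 1), fc k * P k t) :
    fc 0 * #C ^ 2 ≤ ∑ c ∈ C, ∑ c' ∈ C, f (g c c') := by
  have hexpand : ∑ c ∈ C, ∑ c' ∈ C, f (g c c')
      = ∑ k ∈ range (l + 1), fc k * ∑ c ∈ C, ∑ c' ∈ C, P k (g c c') := by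
    simp only [hf, mul_sum]
    exact (sum_congr rfl fun _ _ => sum_comm).trans sum_comm
  have hhigher : 0 ≤ ∑ k ∈ range l, fc (k + 1) * ∑ c ∈ C, ∑ c' ∈ C, P (k + 1) (g c c') :=
    sum_nonneg fun k hk =>
      mul_nonneg (hfc _ k.succ_pos (mem_range.1 hk)) (hposdef _)
  rw [hexpand, sum_range_succ']
  simp only [hP0, sum_const, nsmul_eq_mul, mul_one]
  linear_combination hhigher

theorem sum_offDiag_inner_add_card_mul {n : ℕ} (C : Finset (EuclideanSpace ℝ (Fin n)))
    (hunit : ∀ c ∈ C, ‖c‖ = 1) (h : ℝ → ℝ) :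
    ∑ p ∈ C.offDiag, h (inner ℝ p.1 p.2) + (#C : ℝ) * h 1 =
      ∑ c ∈ C, ∑ c' ∈ C, h (inner ℝ c c') := by
  have hdiag : ∑ p ∈ C.diag, h (inner ℝ p.1 p.2) = (#C : ℝ) * h 1 := by
    rw [sum_diag, ← nsmul_eq_mul, ← sum_const]
    exact sum_congr rfl fun c hc => by rw [real_inner_self_eq_norm_sq, hunit c hc, one_pow]
  rw [← hdiag, add_comm, ← sum_union (disjoint_diag_offDiag C), diag_union_offDiag, sum_product]

theorem distDensity_equiSegment (n : ℕ) (C : Finset (EuclideanSpace ℝ (Fin n))) (a b : ℝ)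
    (m i : ℕ) :
    distDensity n C (a + i * (b - a) / m) (a + (i + 1) * (b - a) / m) =
      #{p ∈ C.offDiag | inner ℝ p.1 p.2 ∈ equiSegment a b m i} / #C := by
  unfold distDensity
  congr 3
  ext p
  simp [equiSegment, mem_offDiag, and_assoc]

/-- Lower bound on the distance density of spherical codes (Theorem 2):
on some segment `U_i = [u_i, u_{i+1}]` of the equipartition of `[u_0, s_max]`
there is a point `s` with `a(u_i,u_{i+1}) ≥ (f_0|C| − f(1))/(m f(s))`. -/
theorem stmt16 (n l m : ℕ) (hm : 0 < m)
    (C : Finset (EuclideanSpace ℝ (Fin n))) (hunit : ∀ c ∈ C, ‖c‖ = 1)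
    (smax u0 : ℝ)
    (hsmax : IsGreatest {t : ℝ | ∃ c ∈ C, ∃ c' ∈ C, c ≠ c' ∧ (inner ℝ c c' : ℝ) = t} smax)
    (hu0 : u0 < smax) (hs1 : smax < 1)
    (P : ℕ → ℝ → ℝ) (hP0 : ∀ t, P 0 t = 1)
    (hposdef : ∀ k, 0 ≤ ∑ c ∈ C, ∑ c' ∈ C, P k (inner ℝ c c' : ℝ))
    (fc : ℕ → ℝ) (hfc : ∀ k, 1 ≤ k → k ≤ l → 0 ≤ fc k)
    (f : ℝ → ℝ) (hf : ∀ t, f t = ∑ k ∈ Finset.range (l + 1), fc k * P k t)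
    (hfneg : ∀ t, -1 ≤ t → t ≤ u0 → f t ≤ 0)
    (hfpos : ∀ t, u0 ≤ t → t ≤ 1 → 0 ≤ f t)
    (hmain : 0 < fc 0 * (C.card : ℝ) - f 1) :
    ∃ i : ℕ, i < m ∧
      ∃ s ∈ Set.Icc (u0 + i * (smax - u0) / m) (u0 + (i + 1) * (smax - u0) / m),
        distDensity n C (u0 + i * (smax - u0) / m) (u0 + (i + 1) * (smax - u0) / m)
          ≥ (fc 0 * (C.card : ℝ) - f 1) / (m * f s) := by
  obtain ⟨c, hc, -⟩ := hsmax.1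
  have hcard : (0 : ℝ) < #C := by exact_mod_cast card_pos.2 ⟨c, hc⟩
  have hinner : ∀ p ∈ C.offDiag, inner ℝ p.1 p.2 ∈ Set.Icc (-1) smax := fun p hp => by
    obtain ⟨h1, h2, hne⟩ := mem_offDiag.1 hp
    exact ⟨neg_one_le_real_inner_of_norm_eq_one (hunit _ h1) (hunit _ h2),
      hsmax.2 ⟨_, h1, _, h2, hne, rfl⟩⟩
  have hoffDiag : #C * (fc 0 * #C - f 1) ≤ ∑ p ∈ C.offDiag, f (inner ℝ p.1 p.2) := by
    have hsplit := sum_offDiag_inner_add_card_mul C hunit f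
    have hdelsarte :=
      mul_card_sq_le_sum_sum C (fun c c' => inner ℝ c c') P hP0 hposdef fc hfc f hf
    linear_combination hdelsarte - hsplit
  obtain ⟨i, hi, p, -, hpi, hbound⟩ := exists_equiSegment_le_mul_card_mul C.offDiag
    (fun p => inner ℝ p.1 p.2) (fun p => f (inner ℝ p.1 p.2)) hm hu0.le
    (fun p hp => (hinner p hp).2) (fun p hp hlt => hfneg _ (hinner p hp).1 hlt.le)
    (fun p hp hge => hfpos _ hge ((hinner p hp).2.trans hs1.le)) (by positivity) hoffDiag
  have hfs : 0 < f (inner ℝ p.1 p.2) :=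
    pos_of_mul_pos_right ((by positivity : (0 : ℝ) < _).trans_le hbound) (by positivity)
  refine ⟨i, hi, _, hpi, ?_⟩
  rw [distDensity_equiSegment, ge_iff_le, div_le_div_iff₀ (by positivity) hcard]
  linarith
end

section
/- Let C ⊆ F_2^n be a nonempty code with distance distribution (A_i). For any w with 1 ≤ w ≤ n, the binomial moment satisfies F_w = Σ_{i=0}^w binom(n−i, n−w)·A_i = (1/|C|)·Σ_{S ⊆ {1,…,n}, |S| = w} Σ_{y} |{c ∈ C : c restricted to the complement of S equals y}|². -/
open Finset

lemma count_supersets {α : Type*} [DecidableEq α] [Fintype α] (D : Finset α) (w : ℕ)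
    (hd : D.card ≤ w) :
    ((Finset.powersetCard w (Finset.univ : Finset α)).filter (fun S => D ⊆ S)).card
      = (Fintype.card α - D.card).choose (w - D.card) := by
  have hcard : Fintype.card α - D.card = (Finset.univ \ D).card := by
    rw [Finset.card_sdiff_of_subset (Finset.subset_univ D), Finset.card_univ]
  rw [hcard, ← Finset.card_powersetCard (w - D.card) (Finset.univ \ D)]
  apply Finset.card_bij' (fun S _ => S \ D) (fun T _ => T ∪ D)
  · intro S hS
    simp only [mem_filter, mem_powersetCard] at hS
    rw [mem_powersetCard]
    constructor
    · intro x hx; simp only [mem_sdiff] at hx ⊢; exact ⟨mem_univ x, hx.2⟩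
    · rw [Finset.card_sdiff_of_subset hS.2, hS.1.2]
  · intro T hT
    rw [mem_powersetCard] at hT
    simp only [mem_filter, mem_powersetCard]
    have hdisj : Disjoint T D := by
      intro x hx hx'
      intro a ha
      have := hT.1 (hx ha)
      simp only [mem_sdiff] at this
      exact absurd (hx' ha) this.2
    refine ⟨⟨fun x _ => mem_univ x, ?_⟩, Finset.subset_union_right⟩
    rw [Finset.card_union_of_disjoint hdisj, hT.2]
    omega
  · intro S hS
    simp only [mem_filter] at hS
    rw [Finset.sdiff_union_of_subset hS.2]
  · intro T hT
    rw [mem_powersetCard] at hT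
    apply Finset.union_sdiff_cancel_right
    intro x hx hx'
    intro a ha
    have := hT.1 (hx ha)
    simp only [mem_sdiff] at this
    exact absurd (hx' ha) this.2

lemma inner_sum_eq (n : ℕ) (C : Finset (Fin n → ZMod 2)) (S : Finset (Fin n)) :
    ∑ y : {e : Fin n // e ∉ S} → ZMod 2,
        ((C.filter (fun c => ∀ e : {e : Fin n // e ∉ S}, c e.1 = y e)).card) ^ 2
      = ((C ×ˢ C).filter
          (fun p => ∀ e : {e : Fin n // e ∉ S}, p.1 e.1 = p.2 e.1)).card := by
  classical
  have key : ((C ×ˢ C).filter (fun p => ∀ e : {e : Fin n // e ∉ S}, p.1 e.1 = p.2 e.1))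
      = Finset.univ.biUnion (fun y : {e : Fin n // e ∉ S} → ZMod 2 =>
          (C.filter (fun c => ∀ e : {e : Fin n // e ∉ S}, c e.1 = y e)) ×ˢ
          (C.filter (fun c => ∀ e : {e : Fin n // e ∉ S}, c e.1 = y e))) := by
    ext p
    simp only [mem_filter, mem_biUnion, mem_univ, true_and, mem_product]
    constructor
    · rintro ⟨⟨h1, h2⟩, h3⟩
      refine ⟨fun e => p.1 e.1, ⟨h1, fun e => rfl⟩, ⟨h2, fun e => (h3 e).symm⟩⟩
    · rintro ⟨y, ⟨h1, hy1⟩, ⟨h2, hy2⟩⟩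
      exact ⟨⟨h1, h2⟩, fun e => (hy1 e).trans (hy2 e).symm⟩
  rw [key, Finset.card_biUnion]
  · apply Finset.sum_congr rfl
    intro y _
    rw [Finset.card_product, sq]
  · intro y1 _ y2 _ hne
    apply Finset.disjoint_left.mpr
    rintro p hp1 hp2
    simp only [mem_product, mem_filter] at hp1 hp2
    apply hne
    funext e
    exact (hp1.1.2 e).symm.trans (hp2.1.2 e)

lemma pair_count (n w : ℕ) (hwn : w ≤ n) (x y : Fin n → ZMod 2) :
    ((Finset.powersetCard w (Finset.univ : Finset (Fin n))).filter
        (fun S => ∀ e : {e : Fin n // e ∉ S}, x e.1 = y e.1)).card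
      = (n - hammingDist x y).choose (n - w) := by
  classical
  set D : Finset (Fin n) := Finset.univ.filter (fun i => x i ≠ y i) with hD
  have hDcard : D.card = hammingDist x y := rfl
  have hcond : ∀ S : Finset (Fin n),
      (∀ e : {e : Fin n // e ∉ S}, x e.1 = y e.1) ↔ D ⊆ S := by
    intro S
    constructor
    · intro h i hi
      simp only [hD, mem_filter, mem_univ, true_and] at hi
      by_contra hiS
      exact hi (h ⟨i, hiS⟩)
    · intro h e
      by_contra hne
      exact e.2 (h (by simp [hD, hne]))
  have : ((Finset.powersetCard w (Finset.univ : Finset (Fin n))).filter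
        (fun S => ∀ e : {e : Fin n // e ∉ S}, x e.1 = y e.1))
      = ((Finset.powersetCard w (Finset.univ : Finset (Fin n))).filter (fun S => D ⊆ S)) := by
    apply Finset.filter_congr
    intro S _
    rw [← hcond S]
  rw [this]
  by_cases hdw : D.card ≤ w
  · rw [count_supersets D w hdw, Fintype.card_fin, hDcard]
    have hdn : hammingDist x y ≤ n := (hammingDist_le_card_fintype).trans (by simp)
    have h1 : w - hammingDist x y = (n - hammingDist x y) - (n - w) := by omega
    rw [h1, Nat.choose_symm (by omega)]
  · have h1 : ((Finset.powersetCard w (Finset.univ : Finset (Fin n))).filter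
        (fun S => D ⊆ S)) = ∅ := by
      apply Finset.filter_false_of_mem
      intro S hS
      rw [mem_powersetCard] at hS
      intro hsub
      exact hdw ((Finset.card_le_card hsub).trans (le_of_eq hS.2))
    rw [h1, Finset.card_empty]
    have hdn : D.card ≤ n := (Finset.card_le_univ D).trans (by simp)
    rw [← hDcard]
    rw [eq_comm, Nat.choose_eq_zero_iff]
    omega

/-- Combinatorial meaning of the binomial moment:
`F_w = (1/|C|) Σ_{|S|=w} Σ_y |{c ∈ C : c agrees with y outside S}|²`. -/
theorem stmt18 (n w : ℕ) (hw1 : 1 ≤ w) (hwn : w ≤ n)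
    (C : Finset (Fin n → ZMod 2)) (hC : C.Nonempty) :
    ∑ i ∈ Finset.range (w + 1), ((n - i).choose (n - w) : ℝ) * distDistr n C i
      = (1 / (C.card : ℝ)) *
          ∑ S ∈ Finset.powersetCard w (Finset.univ : Finset (Fin n)),
            ∑ y : {e : Fin n // e ∉ S} → ZMod 2,
              (((C.filter (fun c => ∀ e : {e : Fin n // e ∉ S}, c e.1 = y e)).card : ℝ)) ^ 2 := by
  classical
  -- N : common natural number value
  set N : ℕ := ∑ p ∈ C ×ˢ C, (n - hammingDist p.1 p.2).choose (n - w) with hN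
  have claimA : ∑ i ∈ Finset.range (w + 1),
      (n - i).choose (n - w) * ((C ×ˢ C).filter (fun p => hammingDist p.1 p.2 = i)).card = N := by
    have hext : ∑ i ∈ Finset.range (w + 1),
        (n - i).choose (n - w) * ((C ×ˢ C).filter (fun p => hammingDist p.1 p.2 = i)).card
      = ∑ i ∈ Finset.range (n + 1),
        (n - i).choose (n - w) * ((C ×ˢ C).filter (fun p => hammingDist p.1 p.2 = i)).card := by
      apply (Finset.sum_subset (by intro i hi; simp at hi ⊢; omega) ?_)
      intro i hi hni
      simp only [mem_range] at hi hni
      have : (n - i).choose (n - w) = 0 := by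
        rw [Nat.choose_eq_zero_iff]; omega
      rw [this, zero_mul]
    rw [hext, hN]
    have hmaps : ∀ p ∈ C ×ˢ C, hammingDist p.1 p.2 ∈ Finset.range (n+1) := by
      intro p _
      simp only [mem_range]
      exact Nat.lt_succ_of_le ((hammingDist_le_card_fintype).trans (by simp))
    rw [← Finset.sum_fiberwise_of_maps_to hmaps
      (fun p => (n - hammingDist p.1 p.2).choose (n - w))]
    apply Finset.sum_congr rfl
    intro i _
    rw [Finset.sum_congr rfl
      (fun p hp => by rw [(Finset.mem_filter.mp hp).2]), Finset.sum_const,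
      smul_eq_mul, mul_comm]
  have claimB : ∑ S ∈ Finset.powersetCard w (Finset.univ : Finset (Fin n)),
      ∑ y : {e : Fin n // e ∉ S} → ZMod 2,
        ((C.filter (fun c => ∀ e : {e : Fin n // e ∉ S}, c e.1 = y e)).card) ^ 2 = N := by
    have h1 : ∀ S ∈ Finset.powersetCard w (Finset.univ : Finset (Fin n)),
        ∑ y : {e : Fin n // e ∉ S} → ZMod 2,
          ((C.filter (fun c => ∀ e : {e : Fin n // e ∉ S}, c e.1 = y e)).card) ^ 2
        = ((C ×ˢ C).filter
            (fun p => ∀ e : {e : Fin n // e ∉ S}, p.1 e.1 = p.2 e.1)).card :=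
      fun S _ => inner_sum_eq n C S
    rw [Finset.sum_congr rfl h1]
    simp_rw [Finset.card_filter]
    rw [Finset.sum_comm]
    rw [hN]
    apply Finset.sum_congr rfl
    intro p _
    rw [← Finset.card_filter]
    exact pair_count n w hwn p.1 p.2
  have hCcard : (C.card : ℝ) ≠ 0 := by
    exact_mod_cast Finset.card_ne_zero_of_mem hC.choose_spec
  -- now assemble
  have lhs_eq : ∑ i ∈ Finset.range (w + 1), ((n - i).choose (n - w) : ℝ) * distDistr n C i
      = (N : ℝ) / (C.card : ℝ) := by
    rw [← claimA]
    push_cast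
    rw [Finset.sum_div]
    apply Finset.sum_congr rfl
    intro i _
    rw [distDistr, mul_div_assoc]
  rw [lhs_eq]
  have rhs_eq : ∑ S ∈ Finset.powersetCard w (Finset.univ : Finset (Fin n)),
      ∑ y : {e : Fin n // e ∉ S} → ZMod 2,
        (((C.filter (fun c => ∀ e : {e : Fin n // e ∉ S}, c e.1 = y e)).card : ℝ)) ^ 2
      = (N : ℝ) := by
    rw [← claimB]
    push_cast
    rfl
  rw [rhs_eq]
  ring
end
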